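/- arXiv:2405.16489 — 2 statements merged into one kernel-verified Lean document; each statement's English description precedes it below -/
import Mathlib

section
/- (Theorem 2, decomposition of the negative log-likelihood objective.) Let C, S, A be discrete random variables and let q : 𝒞 → (𝒜 → ℝ) assign to each c a probability mass function q(c) on 𝒜 (q(c)(a) ≥ 0 and ∑_a q(c)(a) = 1) such that q(c)(a) > 0 whenever P(C = c ∧ A = a) > 0. Then the expected negative conditional log-likelihood decomposes as: ∑_{c,a : P(C=c ∧ A=a) > 0} P(C = c ∧ A = a) · ( − log q(c)(a) ) = ∑_{c,a : P(C=c ∧ A=a) > 0} P(C = c ∧ A = a) · log ( P(A = a ∧ C = c) / ( P(C = c) · q(c)(a) ) ) + I(S : A | C) + H(A | ⟨C, S⟩). In words: E[−log q(A | C)] = E[ log ( p(A | C) / q(A | C) ) ] + I(S : A | C) + H(A | ⟨C, S⟩), so minimizing the negative log-likelihood of the model q given the causal subgraph C is equivalent to minimizing the model-mismatch term E[log(p(A|C)/q(A|C))] plus the spurious-correlation term I(S : A | C), up to the constant H(A | ⟨C, S⟩) inherent in the data. -/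
open MeasureTheory ProbabilityTheory

/-- Shannon entropy of a discrete random variable `X` valued in a finite type. -/
noncomputable def Hent {Ω 𝒳 : Type*} [MeasurableSpace Ω] [Fintype 𝒳]
    (P : Measure Ω) (X : Ω → 𝒳) : ℝ :=
  - ∑ x : 𝒳, (P (X ⁻¹' {x})).toReal * Real.log (P (X ⁻¹' {x})).toReal

/-- Conditional entropy `H(X | Y) = H(⟨X, Y⟩) − H(Y)`. -/
noncomputable def condHent {Ω 𝒳 𝒴 : Type*} [MeasurableSpace Ω] [Fintype 𝒳] [Fintype 𝒴]
    (P : Measure Ω) (X : Ω → 𝒳) (Y : Ω → 𝒴) : ℝ :=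
  Hent P (fun ω => (X ω, Y ω)) - Hent P Y

/-- Mutual information `I(X : Y) = H(X) + H(Y) − H(⟨X, Y⟩)`. -/
noncomputable def MInfo {Ω 𝒳 𝒴 : Type*} [MeasurableSpace Ω] [Fintype 𝒳] [Fintype 𝒴]
    (P : Measure Ω) (X : Ω → 𝒳) (Y : Ω → 𝒴) : ℝ :=
  Hent P X + Hent P Y - Hent P (fun ω => (X ω, Y ω))

/-- Conditional mutual information `I(X : Y | Z) = H(X|Z) + H(Y|Z) − H(⟨X,Y⟩|Z)`. -/
noncomputable def condMInfo {Ω 𝒳 𝒴 𝒵 : Type*} [MeasurableSpace Ω]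
    [Fintype 𝒳] [Fintype 𝒴] [Fintype 𝒵]
    (P : Measure Ω) (X : Ω → 𝒳) (Y : Ω → 𝒴) (Z : Ω → 𝒵) : ℝ :=
  condHent P X Z + condHent P Y Z - condHent P (fun ω => (X ω, Y ω)) Z

/-!
On the support of `(C, A)`,
`-log q(a|c) = log (p(c,a) / (p(c) q(a|c))) - log (p(c,a) / p(c))`,
so the expected negative log-likelihood is the mismatch term plus `H(A | C)`. The remaining
identity `H(A | C) = I(S : A | C) + H(A | ⟨C, S⟩)` is the chain rule: after unfolding, it only
uses that entropy is invariant under relabelling the values of a random variable.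
-/

lemma mul_log_sub_mul_log_eq_mul_log_div {p r : ℝ} (h : p ≠ 0 → r ≠ 0) :
    p * Real.log p - p * Real.log r = p * Real.log (p / r) := by
  rcases eq_or_ne p 0 with rfl | hp
  · simp
  · rw [Real.log_div hp (h hp)]
    ring

section Entropy

variable {Ω 𝒳 𝒴 𝒵 : Type*} [MeasurableSpace Ω] [Fintype 𝒳] [Fintype 𝒴] [Fintype 𝒵]
  (P : Measure Ω)

lemma Hent_comp_equiv (X : Ω → 𝒳) (e : 𝒳 ≃ 𝒴) :
    Hent P (fun ω => e (X ω)) = Hent P X := by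
  unfold Hent
  congr 1
  refine Fintype.sum_equiv e.symm _ _ fun y => ?_
  have hpre : (fun ω => e (X ω)) ⁻¹' {y} = X ⁻¹' {e.symm y} := by
    ext ω; simp [Equiv.eq_symm_apply]
  rw [hpre]

lemma Hent_prod_comm (X : Ω → 𝒳) (Y : Ω → 𝒴) :
    Hent P (fun ω => (X ω, Y ω)) = Hent P (fun ω => (Y ω, X ω)) :=
  Hent_comp_equiv P (fun ω => (Y ω, X ω)) (Equiv.prodComm 𝒴 𝒳)

lemma condMInfo_add_condHent (X : Ω → 𝒳) (Y : Ω → 𝒴) (Z : Ω → 𝒵) :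
    condMInfo P X Y Z + condHent P Y (fun ω => (Z ω, X ω)) = condHent P Y Z := by
  have hXYZ : Hent P (fun ω => ((X ω, Y ω), Z ω)) = Hent P (fun ω => (Y ω, (Z ω, X ω))) :=
    Hent_comp_equiv P (fun ω => (Y ω, (Z ω, X ω)))
      ⟨fun v => ((v.2.2, v.1), v.2.1), fun u => (u.1.2, (u.2, u.1.1)),
        fun _ => rfl, fun _ => rfl⟩
  unfold condMInfo condHent
  rw [hXYZ, Hent_prod_comm P X Z]
  ring

lemma Hent_prod (X : Ω → 𝒳) (Y : Ω → 𝒴) :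
    Hent P (fun ω => (X ω, Y ω)) = -∑ x, ∑ y,
      (P (X ⁻¹' {x} ∩ Y ⁻¹' {y})).toReal * Real.log (P (X ⁻¹' {x} ∩ Y ⁻¹' {y})).toReal := by
  simp only [Hent, Fintype.sum_prod_type, ← Set.singleton_prod_singleton, Set.mk_preimage_prod]

lemma toReal_measure_eq_sum_inter_preimage [IsFiniteMeasure P] [MeasurableSpace 𝒴]
    [MeasurableSingletonClass 𝒴] {Y : Ω → 𝒴} (hY : Measurable Y) (t : Set Ω) :
    (P t).toReal = ∑ y, (P (t ∩ Y ⁻¹' {y})).toReal := by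
  have hfiber : ∀ y, MeasurableSet (Y ⁻¹' {y}) := fun y => hY (MeasurableSet.singleton y)
  have hcover : ⋃ y, Y ⁻¹' {y} = Set.univ := by
    ext ω; simp
  have hsum : P t = ∑ y, P (t ∩ Y ⁻¹' {y}) :=
    calc P t = P.restrict (⋃ y, Y ⁻¹' {y}) t := by rw [hcover, Measure.restrict_univ]
      _ = ∑' y, P.restrict (Y ⁻¹' {y}) t := by
        rw [Measure.restrict_iUnion (pairwise_disjoint_fiber Y) hfiber,
          Measure.sum_apply_of_countable]
      _ = ∑ y, P (t ∩ Y ⁻¹' {y}) := by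
        simp only [tsum_fintype, Measure.restrict_apply' (hfiber _)]
  rw [hsum, ENNReal.toReal_sum fun y _ => measure_ne_top P _]

lemma condHent_eq_sum [IsFiniteMeasure P] [MeasurableSpace 𝒴] [MeasurableSingletonClass 𝒴]
    {Y : Ω → 𝒴} (hY : Measurable Y) (X : Ω → 𝒳) :
    condHent P Y X = -∑ x, ∑ y, (P (X ⁻¹' {x} ∩ Y ⁻¹' {y})).toReal *
      Real.log ((P (X ⁻¹' {x} ∩ Y ⁻¹' {y})).toReal / (P (X ⁻¹' {x})).toReal) := by
  have hmarginal : ∀ x, (P (X ⁻¹' {x})).toReal * Real.log (P (X ⁻¹' {x})).toReal =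
      ∑ y, (P (X ⁻¹' {x} ∩ Y ⁻¹' {y})).toReal * Real.log (P (X ⁻¹' {x})).toReal := by
    intro x
    rw [← Finset.sum_mul, ← toReal_measure_eq_sum_inter_preimage P hY]
  have hmarginal_ne : ∀ x y, (P (X ⁻¹' {x} ∩ Y ⁻¹' {y})).toReal ≠ 0 →
      (P (X ⁻¹' {x})).toReal ≠ 0 := fun x y hxy =>
    ((lt_of_le_of_ne ENNReal.toReal_nonneg (Ne.symm hxy)).trans_le
      (measureReal_mono Set.inter_subset_left)).ne'
  rw [condHent, Hent_prod_comm, Hent_prod, Hent]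
  simp only [hmarginal, ← mul_log_sub_mul_log_eq_mul_log_div (hmarginal_ne _ _),
    Finset.sum_sub_distrib]
  ring

end Entropy

open scoped Classical in
theorem stmt8_general {Ω 𝒞 𝒮 𝒜 : Type*} [MeasurableSpace Ω]
    [Fintype 𝒞] [Fintype 𝒮] [Fintype 𝒜] [MeasurableSpace 𝒜] [DiscreteMeasurableSpace 𝒜]
    (P : Measure Ω) [IsProbabilityMeasure P]
    (C : Ω → 𝒞) (S : Ω → 𝒮) (A : Ω → 𝒜)
    (hA : Measurable A)
    (q : 𝒞 → 𝒜 → ℝ)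
    (hq_pos : ∀ c a, P (C ⁻¹' {c} ∩ A ⁻¹' {a}) ≠ 0 → 0 < q c a) :
    (∑ c : 𝒞, ∑ a : 𝒜,
        if P (C ⁻¹' {c} ∩ A ⁻¹' {a}) ≠ 0 then
          (P (C ⁻¹' {c} ∩ A ⁻¹' {a})).toReal * (- Real.log (q c a))
        else 0) =
      (∑ c : 𝒞, ∑ a : 𝒜,
        if P (C ⁻¹' {c} ∩ A ⁻¹' {a}) ≠ 0 then
          (P (C ⁻¹' {c} ∩ A ⁻¹' {a})).toReal *
            Real.log ((P (A ⁻¹' {a} ∩ C ⁻¹' {c})).toReal /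
              ((P (C ⁻¹' {c})).toReal * q c a))
        else 0)
      + condMInfo P S A C + condHent P A (fun ω => (C ω, S ω)) := by
  rw [add_assoc, condMInfo_add_condHent, condHent_eq_sum P hA, ← sub_eq_add_neg,
    ← Finset.sum_sub_distrib]
  refine Fintype.sum_congr _ _ fun c => ?_
  rw [← Finset.sum_sub_distrib]
  refine Fintype.sum_congr _ _ fun a => ?_
  split_ifs with hca
  · have hp : 0 < (P (C ⁻¹' {c} ∩ A ⁻¹' {a})).toReal :=
      ENNReal.toReal_pos hca (measure_ne_top P _)
    have hc : 0 < (P (C ⁻¹' {c})).toReal :=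
      ENNReal.toReal_pos (ne_bot_of_le_ne_bot hca (measure_mono Set.inter_subset_left))
        (measure_ne_top P _)
    rw [Set.inter_comm (A ⁻¹' _), Real.log_div hp.ne' (mul_pos hc (hq_pos c a hca)).ne',
      Real.log_mul hc.ne' (hq_pos c a hca).ne', Real.log_div hp.ne' hc.ne']
    ring
  · simp [not_not.mp hca]

open scoped Classical in
/-- Theorem 2: decomposition of the expected negative conditional
log-likelihood:
`E[−log q(A | C)] = E[log(p(A|C)/q(A|C))] + I(S : A | C) + H(A | ⟨C,S⟩)`. -/
theorem stmt8 {Ω 𝒞 𝒮 𝒜 : Type*} [MeasurableSpace Ω]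
    [Fintype 𝒞] [Nonempty 𝒞] [MeasurableSpace 𝒞] [DiscreteMeasurableSpace 𝒞]
    [Fintype 𝒮] [Nonempty 𝒮] [MeasurableSpace 𝒮] [DiscreteMeasurableSpace 𝒮]
    [Fintype 𝒜] [Nonempty 𝒜] [MeasurableSpace 𝒜] [DiscreteMeasurableSpace 𝒜]
    (P : Measure Ω) [IsProbabilityMeasure P]
    (C : Ω → 𝒞) (S : Ω → 𝒮) (A : Ω → 𝒜)
    (hC : Measurable C) (hS : Measurable S) (hA : Measurable A)
    (q : 𝒞 → 𝒜 → ℝ)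
    (hq_nonneg : ∀ c a, 0 ≤ q c a)
    (hq_sum : ∀ c, ∑ a : 𝒜, q c a = 1)
    (hq_pos : ∀ c a, P (C ⁻¹' {c} ∩ A ⁻¹' {a}) ≠ 0 → 0 < q c a) :
    (∑ c : 𝒞, ∑ a : 𝒜,
        if P (C ⁻¹' {c} ∩ A ⁻¹' {a}) ≠ 0 then
          (P (C ⁻¹' {c} ∩ A ⁻¹' {a})).toReal * (- Real.log (q c a))
        else 0) =
      (∑ c : 𝒞, ∑ a : 𝒜,
        if P (C ⁻¹' {c} ∩ A ⁻¹' {a}) ≠ 0 then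
          (P (C ⁻¹' {c} ∩ A ⁻¹' {a})).toReal *
            Real.log ((P (A ⁻¹' {a} ∩ C ⁻¹' {c})).toReal /
              ((P (C ⁻¹' {c})).toReal * q c a))
        else 0)
      + condMInfo P S A C + condHent P A (fun ω => (C ω, S ω)) :=
  stmt8_general P C S A hA q hq_pos
end

section
/- Functional representation lemma (finite case, as invoked in the proof of Theorem 1): for any discrete random variables X₁ (valued in a finite type 𝒳₁) and X₂ (valued in a finite type 𝒳₂) on a probability space, there exist a probability space (Ω′, ℱ′, P′), a finite type 𝒯, random variables Y₁ : Ω′ → 𝒳₁ and Y₃ : Ω′ → 𝒯 with Y₁ and Y₃ independent, and a function γ : 𝒳₁ × 𝒯 → 𝒳₂, such that the pair ⟨Y₁, γ(Y₁, Y₃)⟩ has the same joint distribution as ⟨X₁, X₂⟩. -/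
open MeasureTheory ProbabilityTheory

/-!
Draw `Y₁` with the law of `X₁` and, independently, a random function `Y₃ : 𝒳₁ → 𝒳₂` whose values
`Y₃ a` are independent, each distributed as `X₂` conditioned on `X₁ = a` (a disintegration of
the joint law). Then `γ (x, t) = t x` gives `(Y₁, Y₃ Y₁)` the law of `(X₁, X₂)`.
-/

namespace MeasureTheory.Measure

variable {α β : Type*} [Fintype α] [MeasurableSpace α] [DiscreteMeasurableSpace α]
  [Countable β] [MeasurableSpace β] [DiscreteMeasurableSpace β]

theorem map_prod_pi_eval_eq_compProd (μ : Measure α) [SFinite μ]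
    (κ : Kernel α β) [IsMarkovKernel κ] :
    (μ.prod (Measure.pi fun a => κ a)).map (fun p => (p.1, p.2 p.1)) = μ ⊗ₘ κ := by
  refine ext_of_singleton fun ⟨x, y⟩ => ?_
  have hpre : (fun p : α × (α → β) => (p.1, p.2 p.1)) ⁻¹' {(x, y)} =
      {x} ×ˢ ((Function.eval x : (α → β) → β) ⁻¹' {y}) := by
    ext ⟨a, t⟩
    constructor <;> simp +contextual
  rw [map_apply .of_discrete (.singleton _), hpre, prod_prod,
    (measurePreserving_eval _ x).measure_preimage (MeasurableSet.singleton y).nullMeasurableSet,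
    ← Set.singleton_prod_singleton, compProd_apply_prod (.singleton x) (.singleton y),
    lintegral_singleton, mul_comm]

theorem map_fst_prod_pi_condKernel_eval [Nonempty β] (ρ : Measure (α × β)) [IsFiniteMeasure ρ] :
    (ρ.fst.prod (Measure.pi fun a => ρ.condKernel a)).map (fun p => (p.1, p.2 p.1)) = ρ := by
  rw [map_prod_pi_eval_eq_compProd, ρ.disintegrate ρ.condKernel]

end MeasureTheory.Measure

theorem stmt9_general {Ω 𝒳₁ 𝒳₂ : Type*} [MeasurableSpace Ω]
    [Fintype 𝒳₁] [MeasurableSpace 𝒳₁] [DiscreteMeasurableSpace 𝒳₁]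
    [Fintype 𝒳₂] [Nonempty 𝒳₂] [MeasurableSpace 𝒳₂] [DiscreteMeasurableSpace 𝒳₂]
    (P : Measure Ω) [IsProbabilityMeasure P]
    (X₁ : Ω → 𝒳₁) (X₂ : Ω → 𝒳₂)
    (hX₁ : Measurable X₁) (hX₂ : Measurable X₂) :
    ∃ (Ω' : Type) (_ : MeasurableSpace Ω') (P' : Measure Ω') (_ : IsProbabilityMeasure P')
      (𝒯 : Type) (_ : Fintype 𝒯) (_ : Nonempty 𝒯)
      (Y₁ : Ω' → 𝒳₁) (Y₃ : Ω' → 𝒯) (γ : 𝒳₁ × 𝒯 → 𝒳₂),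
      (∀ (x : 𝒳₁) (t : 𝒯),
        P' (Y₁ ⁻¹' {x} ∩ Y₃ ⁻¹' {t}) = P' (Y₁ ⁻¹' {x}) * P' (Y₃ ⁻¹' {t})) ∧
      (∀ (x₁ : 𝒳₁) (x₂ : 𝒳₂),
        P' ((fun ω => (Y₁ ω, γ (Y₁ ω, Y₃ ω))) ⁻¹' {(x₁, x₂)}) =
          P ((fun ω => (X₁ ω, X₂ ω)) ⁻¹' {(x₁, x₂)})) := by
  -- `Ω'` and `𝒯` must live in `Type`, so the construction is carried out on `Fin` copies.
  let e₁ := Fintype.equivFin 𝒳₁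
  let e₂ := Fintype.equivFin 𝒳₂
  have : Nonempty (Fin (Fintype.card 𝒳₂)) := e₂.symm.nonempty
  have hX : Measurable fun ω => (X₁ ω, X₂ ω) := hX₁.prodMk hX₂
  let ρ := P.map (Prod.map e₁ e₂ ∘ fun ω => (X₁ ω, X₂ ω))
  have : IsProbabilityMeasure ρ :=
    Measure.isProbabilityMeasure_map (Measurable.of_discrete.comp hX).aemeasurable
  let P' := ρ.fst.prod (Measure.pi fun a => ρ.condKernel a)
  let γ : 𝒳₁ × (Fin _ → Fin _) → 𝒳₂ := fun p => e₂.symm (p.2 (e₁ p.1))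
  have hlaw : P'.map (fun ω => (e₁.symm ω.1, γ (e₁.symm ω.1, ω.2))) =
      P.map (fun ω => (X₁ ω, X₂ ω)) := by
    calc _ = (P'.map fun p => (p.1, p.2 p.1)).map (Prod.map e₁.symm e₂.symm) := by
          rw [Measure.map_map .of_discrete .of_discrete]
          simp [Function.comp_def, γ]
      _ = ρ.map (Prod.map e₁.symm e₂.symm) := by rw [Measure.map_fst_prod_pi_condKernel_eval]
      _ = P.map (fun ω => (X₁ ω, X₂ ω)) := by
          rw [Measure.map_map .of_discrete (Measurable.of_discrete.comp hX)]
          simp [Function.comp_def]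
  refine ⟨_, inferInstance, P', inferInstance, Fin _ → Fin _, inferInstance, inferInstance,
    fun ω => e₁.symm ω.1, fun ω => ω.2, γ, fun x t => ?_, fun x₁ x₂ => ?_⟩
  · exact (indepFun_prod (X := e₁.symm) (Y := id) .of_discrete measurable_id)
      |>.measure_inter_preimage_eq_mul _ _ (.singleton x) (.singleton t)
  · rw [← Measure.map_apply .of_discrete (.singleton _), hlaw,
      Measure.map_apply hX (.singleton _)]

/-- Functional representation lemma (finite case): for discrete random
variables `X₁, X₂` there exist a probability space, a finite type `𝒯`, independent
random variables `Y₁, Y₃` and a function `γ` such that `⟨Y₁, γ(Y₁, Y₃)⟩` has the same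
joint distribution as `⟨X₁, X₂⟩`. -/
theorem stmt9 {Ω 𝒳₁ 𝒳₂ : Type*} [MeasurableSpace Ω]
    [Fintype 𝒳₁] [Nonempty 𝒳₁] [MeasurableSpace 𝒳₁] [DiscreteMeasurableSpace 𝒳₁]
    [Fintype 𝒳₂] [Nonempty 𝒳₂] [MeasurableSpace 𝒳₂] [DiscreteMeasurableSpace 𝒳₂]
    (P : Measure Ω) [IsProbabilityMeasure P]
    (X₁ : Ω → 𝒳₁) (X₂ : Ω → 𝒳₂)
    (hX₁ : Measurable X₁) (hX₂ : Measurable X₂) :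
    ∃ (Ω' : Type) (_ : MeasurableSpace Ω') (P' : Measure Ω') (_ : IsProbabilityMeasure P')
      (𝒯 : Type) (_ : Fintype 𝒯) (_ : Nonempty 𝒯)
      (Y₁ : Ω' → 𝒳₁) (Y₃ : Ω' → 𝒯) (γ : 𝒳₁ × 𝒯 → 𝒳₂),
      (∀ (x : 𝒳₁) (t : 𝒯),
        P' (Y₁ ⁻¹' {x} ∩ Y₃ ⁻¹' {t}) = P' (Y₁ ⁻¹' {x}) * P' (Y₃ ⁻¹' {t})) ∧
      (∀ (x₁ : 𝒳₁) (x₂ : 𝒳₂),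
        P' ((fun ω => (Y₁ ω, γ (Y₁ ω, Y₃ ω))) ⁻¹' {(x₁, x₂)}) =
          P ((fun ω => (X₁ ω, X₂ ω)) ⁻¹' {(x₁, x₂)})) :=
  stmt9_general P X₁ X₂ hX₁ hX₂
end
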